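/- Let p ∈ [0,1], N a positive integer, and ε ∈ [0,1/8] with 1/2 - ε ≤ p ≤ 1/2 + ε. Let r be chosen uniformly at random from {0,...,N-1}, and let X_1,...,X_{2N} be independent {0,1}-valued random variables, each equal to 1 with probability in [1/2-ε, 1/2+ε]. Suppose N is at least 64 and 3N^{-1/3} + 4ε ≤ 1. Then the probability that r + X_1 + ... + X_{2N} taken modulo 2N lies in {0,...,N-1} is less than 3N^{-1/3} + 4ε. -/

import Mathlib

/-!
Averaging over the uniformly random start `r` first: for a number `S ≤ 2N` of increments, the
starts `r < N` with `(r + S) mod 2N < N` are exactly those in `[2N - S, N) ∪ [0, N - S)`, so there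
are `|S - N|` of them and the acceptance probability is `E|S - N| / N`. Since `S` is a sum of
independent Bernoulli variables, `E|S - E S| ≤ √(Var S) ≤ √N` by Jensen, while
`|E S - N| ≤ 2Nε`; hence the probability is at most `N^{-1/2} + 2ε < 3N^{-1/3} + 4ε`.
-/

open Finset

theorem sum_filter_prod_eq_sum_card_smul {α β M : Type*} [Fintype α] [Fintype β]
    [AddCommMonoid M] (P : α → β → Prop) [∀ a b, Decidable (P a b)] (f : β → M) :
    ∑ x ∈ univ.filter (fun x : α × β => P x.1 x.2), f x.2 = ∑ b, #{a | P a b} • f b := by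
  rw [sum_filter, Fintype.sum_prod_type, sum_comm]
  refine sum_congr rfl fun b _ => ?_
  rw [← sum_filter]
  exact sum_const (f b)

theorem card_filter_add_mod_two_mul_lt {N S : ℕ} (hS : S ≤ 2 * N) :
    (#{r : Fin N | ((r : ℕ) + S) % (2 * N) < N} : ℝ) = |(S : ℝ) - N| := by
  have hrange : {i ∈ range N | (i + S) % (2 * N) < N} = Ico (2 * N - S) N ∪ range (N - S) := by
    ext i
    simp only [mem_filter, mem_range, mem_union, mem_Ico]
    by_cases hi : i < N
    · rcases lt_or_ge (i + S) (2 * N) with h | h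
      · rw [Nat.mod_eq_of_lt h]; omega
      · rw [Nat.mod_eq_sub_mod h, Nat.mod_eq_of_lt (by omega)]; omega
    · omega
  have hdisj : Disjoint (Ico (2 * N - S) N) (range (N - S)) := by
    rw [disjoint_left]; intro i; simp only [mem_Ico, mem_range]; omega
  rw [card_filter, Fin.sum_univ_eq_sum_range (fun i => if (i + S) % (2 * N) < N then 1 else 0),
    ← card_filter, hrange, card_union_of_disjoint hdisj, Nat.card_Ico, card_range]
  rcases le_total S N with h | h
  · rw [show N - (2 * N - S) + (N - S) = N - S by omega, Nat.cast_sub h,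
      abs_of_nonpos (by linarith [(Nat.cast_le (α := ℝ)).2 h])]
    ring
  · rw [show N - (2 * N - S) + (N - S) = S - N by omega, Nat.cast_sub h,
      abs_of_nonneg (by linarith [(Nat.cast_le (α := ℝ)).2 h])]

theorem sum_mul_abs_le_sqrt_sum_mul_sq {ι : Type*} (s : Finset ι) {w f : ι → ℝ}
    (hw : ∀ i ∈ s, 0 ≤ w i) (hw1 : ∑ i ∈ s, w i = 1) :
    ∑ i ∈ s, w i * |f i| ≤ √(∑ i ∈ s, w i * f i ^ 2) := by
  refine Real.le_sqrt_of_sq_le ?_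
  simpa only [smul_eq_mul, sq_abs] using
    (convexOn_pow 2).map_sum_le hw hw1 (p := fun i => |f i|) fun i _ => abs_nonneg (f i)

noncomputable def bernoulliWeight {ι : Type*} [Fintype ι] (p : ι → ℝ) (X : ι → Bool) : ℝ :=
  ∏ i, if X i then p i else 1 - p i

namespace bernoulliWeight

variable {ι : Type*} [Fintype ι] (p : ι → ℝ)

theorem nonneg (hp : ∀ i, p i ∈ Set.Icc (0 : ℝ) 1) (X : ι → Bool) : 0 ≤ bernoulliWeight p X :=
  prod_nonneg fun i _ => by
    cases X i <;> simp [(hp i).1, (hp i).2]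

variable [DecidableEq ι]

theorem sum_mul_prod (f : ι → Bool → ℝ) :
    ∑ X, bernoulliWeight p X * ∏ i, f i (X i) = ∏ i, (p i * f i true + (1 - p i) * f i false) := by
  simp only [bernoulliWeight, ← prod_mul_distrib]
  rw [← Fintype.prod_sum fun i b => (if b then p i else 1 - p i) * f i b]
  simp

theorem sum_eq_one : ∑ X, bernoulliWeight p X = 1 := by
  simpa using sum_mul_prod p fun _ _ => 1

theorem sum_mul_centered_mul_centered (j k : ι) :
    ∑ X, bernoulliWeight p X *
        (((if X j then 1 else 0) - p j) * ((if X k then 1 else 0) - p k))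
      = if j = k then p j * (1 - p j) else 0 := by
  let c (i : ι) (b : Bool) : ℝ := (if b then 1 else 0) - p i
  have hprod (X : ι → Bool) :
      ((if X j then 1 else 0) - p j) * ((if X k then 1 else 0) - p k)
        = ∏ i, (if i = j then c i (X i) else 1) * (if i = k then c i (X i) else 1) := by
    rw [prod_mul_distrib, prod_ite_eq', prod_ite_eq']
    simp [c]
  simp only [hprod]
  rw [sum_mul_prod p fun i b => (if i = j then c i b else 1) * (if i = k then c i b else 1)]
  split_ifs with hjk
  · subst hjk
    rw [show p j * (1 - p j) = ∏ i, if i = j then p i * (1 - p i) else 1 by simp]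
    refine prod_congr rfl fun i _ => ?_
    split_ifs
    · simp only [c, Bool.false_eq_true, ↓reduceIte]
      ring
    · ring
  · refine prod_eq_zero (mem_univ j) ?_
    simp only [↓reduceIte, hjk, mul_one, Bool.false_eq_true, zero_sub, mul_neg, c]
    ring

theorem sum_mul_sq_card_sub_sum :
    ∑ X, bernoulliWeight p X * ((#{i | X i} : ℝ) - ∑ i, p i) ^ 2 = ∑ i, p i * (1 - p i) := by
  have hexpand (X : ι → Bool) : bernoulliWeight p X * ((#{i | X i} : ℝ) - ∑ i, p i) ^ 2 =
      ∑ j, ∑ k, bernoulliWeight p X *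
        (((if X j then 1 else 0) - p j) * ((if X k then 1 else 0) - p k)) := by
    rw [natCast_card_filter, ← sum_sub_distrib, sq, sum_mul_sum, mul_sum]
    simp only [mul_sum]
  simp only [hexpand]
  rw [sum_comm]
  simp only [sum_comm (s := (univ : Finset (ι → Bool))), sum_mul_centered_mul_centered]
  simp

theorem sum_mul_abs_card_sub_le (hp : ∀ i, p i ∈ Set.Icc (0 : ℝ) 1) (t : ℝ) :
    ∑ X, bernoulliWeight p X * |(#{i | X i} : ℝ) - t|
      ≤ √(∑ i, p i * (1 - p i)) + |∑ i, p i - t| := by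
  have hw := nonneg p hp
  calc ∑ X, bernoulliWeight p X * |(#{i | X i} : ℝ) - t|
      ≤ ∑ X, (bernoulliWeight p X * |(#{i | X i} : ℝ) - ∑ i, p i|
          + bernoulliWeight p X * |∑ i, p i - t|) :=
        sum_le_sum fun X _ => by
          rw [← mul_add]; exact mul_le_mul_of_nonneg_left (abs_sub_le _ _ _) (hw X)
    _ = ∑ X, bernoulliWeight p X * |(#{i | X i} : ℝ) - ∑ i, p i| + |∑ i, p i - t| := by
        rw [sum_add_distrib, ← sum_mul, sum_eq_one, one_mul]
    _ ≤ √(∑ i, p i * (1 - p i)) + |∑ i, p i - t| := by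
        gcongr
        rw [← sum_mul_sq_card_sub_sum]
        exact sum_mul_abs_le_sqrt_sum_mul_sq _ (fun X _ => hw X) (sum_eq_one p)

end bernoulliWeight

theorem one_clean_qubit_stability_general (N : ℕ) (hN : 64 ≤ N) (ε : ℝ) (hε0 : 0 ≤ ε)
    (p : Fin (2 * N) → ℝ) (hp01 : ∀ j, p j ∈ Set.Icc (0 : ℝ) 1)
    (hp : ∀ j, p j ∈ Set.Icc (1 / 2 - ε) (1 / 2 + ε)) :
    (∑ x ∈ Finset.univ.filter (fun x : Fin N × (Fin (2 * N) → Bool) =>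
        ((x.1 : ℕ) + (Finset.univ.filter fun j => x.2 j).card) % (2 * N) < N),
      (1 / (N : ℝ)) * ∏ j, (if x.2 j then p j else 1 - p j))
    < 3 * (N : ℝ) ^ (-(1 : ℝ) / 3) + 4 * ε := by
  have hN1 : (1 : ℝ) ≤ N := by exact_mod_cast (by omega : 1 ≤ N)
  have hvar : ∑ j, p j * (1 - p j) ≤ N := by
    calc ∑ j, p j * (1 - p j) ≤ ∑ _j : Fin (2 * N), (1 / 4 : ℝ) :=
          sum_le_sum fun j _ => by nlinarith [sq_nonneg (p j - 1 / 2)]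
      _ ≤ N := by
          simp only [sum_const, card_univ, Fintype.card_fin, nsmul_eq_mul]
          push_cast
          linarith
  have hmean : |∑ j, p j - N| ≤ 2 * N * ε := by
    calc |∑ j, p j - N| = |∑ j, (p j - 1 / 2)| := by
          simp only [sum_sub_distrib, sum_const, card_univ, Fintype.card_fin, nsmul_eq_mul]
          push_cast
          ring_nf
      _ ≤ ∑ _j : Fin (2 * N), ε :=
          (abs_sum_le_sum_abs _ _).trans <| sum_le_sum fun j _ =>
            abs_le.2 ⟨by linarith [(hp j).1], by linarith [(hp j).2]⟩
      _ = 2 * N * ε := by simp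
  have hsqrt : √(N : ℝ) / N ≤ (N : ℝ) ^ (-(1 : ℝ) / 3) := by
    rw [Real.sqrt_div_self', Real.sqrt_eq_rpow, one_div, ← Real.rpow_neg (by positivity)]
    exact Real.rpow_le_rpow_of_exponent_le hN1 (by norm_num)
  calc _ = ∑ X : Fin (2 * N) → Bool, #{r : Fin N | ((r : ℕ) + #{j | X j}) % (2 * N) < N}
          • (1 / (N : ℝ) * bernoulliWeight p X) :=
        sum_filter_prod_eq_sum_card_smul (fun (r : Fin N) (X : Fin (2 * N) → Bool) =>
          ((r : ℕ) + #{j | X j}) % (2 * N) < N) _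
    _ = 1 / N * ∑ X, bernoulliWeight p X * |(#{j | X j} : ℝ) - N| := by
        rw [mul_sum]
        refine sum_congr rfl fun X _ => ?_
        rw [nsmul_eq_mul, card_filter_add_mod_two_mul_lt (card_filter_le _ _ |>.trans_eq (by simp))]
        ring
    _ ≤ 1 / N * (√N + 2 * N * ε) := by
        gcongr
        exact (bernoulliWeight.sum_mul_abs_card_sub_le p hp01 N).trans (by gcongr)
    _ = √N / N + 2 * ε := by field_simp
    _ < 3 * (N : ℝ) ^ (-(1 : ℝ) / 3) + 4 * ε := by
        have : 0 < (N : ℝ) ^ (-(1 : ℝ) / 3) := by positivity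
        linarith

/-- One-Clean-Qubit Stability Checking soundness bound: a counter starts uniformly at random
at `r ∈ {0, ..., N-1}`, and each of `2N` independent rounds increments it with probability
`p j ∈ [1/2-ε, 1/2+ε]` (sample space `Fin N × (Fin (2N) → Bool)` with weight
`(1/N) ∏ⱼ (if incremented then p j else 1 - p j)`).  If `N ≥ 64` (a power of two in the
application), `ε ∈ [0, 1/8]` and `3N^{-1/3} + 4ε ≤ 1`, then the probability that the final
counter value modulo `2N` lies in `{0, ..., N-1}` is less than `3N^{-1/3} + 4ε`. -/
theorem one_clean_qubit_stability (N : ℕ) (hN : 64 ≤ N) (ε : ℝ) (hε0 : 0 ≤ ε)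
    (hε : ε ≤ 1 / 8)
    (hcond : 3 * (N : ℝ) ^ (-(1 : ℝ) / 3) + 4 * ε ≤ 1)
    (p : Fin (2 * N) → ℝ) (hp01 : ∀ j, p j ∈ Set.Icc (0 : ℝ) 1)
    (hp : ∀ j, p j ∈ Set.Icc (1 / 2 - ε) (1 / 2 + ε)) :
    (∑ x ∈ Finset.univ.filter (fun x : Fin N × (Fin (2 * N) → Bool) =>
        ((x.1 : ℕ) + (Finset.univ.filter fun j => x.2 j).card) % (2 * N) < N),
      (1 / (N : ℝ)) * ∏ j, (if x.2 j then p j else 1 - p j))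
    < 3 * (N : ℝ) ^ (-(1 : ℝ) / 3) + 4 * ε :=
  one_clean_qubit_stability_general N hN ε hε0 p hp01 hp
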